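/- arXiv:2210.16976 — 2 statements merged into one kernel-verified Lean document; each statement's English description precedes it below -/
import Mathlib

section
/- Let S and A be finite nonempty sets, let d, n ≥ 1 be integers and λ > 0, B > 0, ζ ≥ 0 reals. Let P : S×A → Δ(S) be a probability transition (P(s′|s,a) ≥ 0, Σ_{s′}P(s′|s,a) = 1). Let φ̂ : S×A → ℝ^d with ‖φ̂(s,a)‖₂ ≤ 1 and ŵ : S → ℝ^d be such that P̂(s′|s,a) := ⟨φ̂(s,a), ŵ(s′)⟩ satisfies P̂(s′|s,a) ≥ 0 and Σ_{s′∈S} P̂(s′|s,a) ≤ 1 for all (s,a), and such that ‖Σ_{s′∈S} ŵ(s′)·l(s′)‖₂ ≤ √d for every l : S → [0,1]. Let μ be a distribution on S×A with Σ_{(s,a)} μ(s,a)·( Σ_{s′∈S} |P̂(s′|s,a) − P(s′|s,a)| )² ≤ ζ. Set Σ̂_μ := n·Σ_{(s,a)} μ(s,a)·φ̂(s,a)φ̂(s,a)ᵀ + λ·I_d and define ν on S×A by ν(s,a) := (1/|A|)·Σ_{(s̃,ã)} μ(s̃,ã)·P(s|s̃,ã) (note: ν is built from the true transition P). Let q′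 be any distribution on S×A, π : S → Δ(A) a policy, and define the subprobability weight q(s,a) := Σ_{(s̃,ã)} q′(s̃,ã)·P̂(s|s̃,ã)·π(a|s). Then for every g : S×A → [0,B]: Σ_{(s,a)} q(s,a)·g(s,a) ≤ E_{(s̃,ã)∼q′}[ min{ ‖φ̂(s̃,ã)‖_{Σ̂_μ^{-1}} · √( 2n·|A|·E_{(s,a)∼ν}[g(s,a)²] + B²·λ·d + 2n·B²·ζ ), B } ]. -/
open Finset Matrix

/-- Euclidean (ℓ²) norm of a finite-dimensional real vector. -/
noncomputable def l2norm {ι : Type*} [Fintype ι] (x : ι → ℝ) : ℝ :=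
  Real.sqrt (∑ i, x i ^ 2)

/-- Matrix-weighted norm ‖x‖_M = √(xᵀ M x). -/
noncomputable def matNorm {ι : Type*} [Fintype ι] (M : Matrix ι ι ℝ) (x : ι → ℝ) : ℝ :=
  Real.sqrt (x ⬝ᵥ M.mulVec x)

/-!
Put `l(s) = ∑ₐ π(a|s) g(s,a) ∈ [0, B]` and `θ = ∑ₛ ŵ(s) l(s)`. By the low-rank form of `P̂`,
`⟨φ̂(s̃,ã), θ⟩ = ∑ₛ P̂(s|s̃,ã) l(s)`, the inner sum of the left-hand side. It is at most `B`
because `P̂` is sub-stochastic, and at most `‖φ̂(s̃,ã)‖_{Σ̂⁻¹} ‖θ‖_{Σ̂}` by Cauchy–Schwarz for `Σ̂`.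
Finally `‖θ‖²_{Σ̂} = n E_μ ⟨φ̂, θ⟩² + λ ‖θ‖²`. The hypothesis on `ŵ`, applied to `l / B`, gives
`‖θ‖² ≤ B² d`. Writing `P̂ = P + (P̂ - P)` and applying Jensen to `P` and to `π` gives
`⟨φ̂, θ⟩² ≤ 2 E_P E_π g² + 2 B² ‖P̂ - P‖₁²`, and averaging over `μ` turns the first term into at
most `2 |A| E_ν g²`, because `π(a|s) ≤ 1` while `ν` spreads each next state uniformly over `A`.
-/

lemma sq_sum_mul_le_sum_mul_sq {ι : Type*} (s : Finset ι) {w f : ι → ℝ}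
    (hw : ∀ i ∈ s, 0 ≤ w i) (hws : ∑ i ∈ s, w i ≤ 1) :
    (∑ i ∈ s, w i * f i) ^ 2 ≤ ∑ i ∈ s, w i * f i ^ 2 := by
  have hwf : 0 ≤ ∑ i ∈ s, w i * f i ^ 2 :=
    sum_nonneg fun i hi => mul_nonneg (hw i hi) (sq_nonneg _)
  calc (∑ i ∈ s, w i * f i) ^ 2 ≤ (∑ i ∈ s, w i) * ∑ i ∈ s, w i * f i ^ 2 :=
        sum_sq_le_sum_mul_sum_of_sq_le_mul s hw (fun i hi => mul_nonneg (hw i hi) (sq_nonneg _))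
          fun i _ => (by ring : _ = _).le
    _ ≤ ∑ i ∈ s, w i * f i ^ 2 := mul_le_of_le_one_left hwf hws

lemma sum_mul_le_of_sum_le_one {ι : Type*} (s : Finset ι) {w f : ι → ℝ} {B : ℝ}
    (hw : ∀ i ∈ s, 0 ≤ w i) (hws : ∑ i ∈ s, w i ≤ 1) (hB : 0 ≤ B) (hf : ∀ i ∈ s, f i ≤ B) :
    ∑ i ∈ s, w i * f i ≤ B :=
  calc ∑ i ∈ s, w i * f i ≤ (∑ i ∈ s, w i) * B := by
        rw [sum_mul]; exact sum_le_sum fun i hi => mul_le_mul_of_nonneg_left (hf i hi) (hw i hi)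
    _ ≤ B := mul_le_of_le_one_left hB hws

lemma sum_mul_mem_Icc {ι : Type*} (s : Finset ι) {w f : ι → ℝ} {B : ℝ}
    (hw : ∀ i ∈ s, 0 ≤ w i) (hws : ∑ i ∈ s, w i ≤ 1) (hB : 0 ≤ B)
    (hf : ∀ i ∈ s, f i ∈ Set.Icc 0 B) : ∑ i ∈ s, w i * f i ∈ Set.Icc 0 B :=
  ⟨sum_nonneg fun i hi => mul_nonneg (hw i hi) (hf i hi).1,
    sum_mul_le_of_sum_le_one s hw hws hB fun i hi => (hf i hi).2⟩

lemma dotProduct_sum_mul {S ι : Type*} [Fintype S] [Fintype ι] (x : ι → ℝ) (w : S → ι → ℝ)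
    (l : S → ℝ) : x ⬝ᵥ (fun j => ∑ s, w s j * l s) = ∑ s, (x ⬝ᵥ w s) * l s := by
  simp only [dotProduct, mul_sum, sum_mul]
  rw [sum_comm]
  exact sum_congr rfl fun s _ => sum_congr rfl fun j _ => by ring

lemma dotProduct_self_le_sq_of_l2norm_le {ι : Type*} [Fintype ι] {x : ι → ℝ} {c : ℝ}
    (h : l2norm x ≤ c) : x ⬝ᵥ x ≤ c ^ 2 := by
  have h0 : 0 ≤ ∑ i, x i ^ 2 := sum_nonneg fun i _ => sq_nonneg _
  calc x ⬝ᵥ x = l2norm x ^ 2 := by rw [l2norm, Real.sq_sqrt h0]; simp only [dotProduct, sq]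
    _ ≤ c ^ 2 := pow_le_pow_left₀ (Real.sqrt_nonneg _) h 2

namespace Matrix

lemma IsHermitian.dotProduct_mulVec_comm {ι : Type*} [Fintype ι] {M : Matrix ι ι ℝ}
    (hM : M.IsHermitian) (x y : ι → ℝ) : x ⬝ᵥ M *ᵥ y = M *ᵥ x ⬝ᵥ y := by
  have hT : Mᵀ = M := by simpa [conjTranspose_eq_transpose_of_trivial] using hM.eq
  rw [dotProduct_mulVec, ← mulVec_transpose, hT]

lemma PosSemidef.sq_dotProduct_mulVec_le {ι : Type*} [Fintype ι] {M : Matrix ι ι ℝ}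
    (hM : M.PosSemidef) (x y : ι → ℝ) :
    (x ⬝ᵥ M *ᵥ y) ^ 2 ≤ (x ⬝ᵥ M *ᵥ x) * (y ⬝ᵥ M *ᵥ y) := by
  classical
  have hsymm : y ⬝ᵥ M *ᵥ x = x ⬝ᵥ M *ᵥ y := by
    rw [hM.isHermitian.dotProduct_mulVec_comm, dotProduct_comm]
  have hCS := (toBilin' M).apply_mul_apply_le_of_forall_zero_le
    (fun v => by simpa [toBilin'_apply'] using hM.dotProduct_mulVec_nonneg v) x y
  simpa only [toBilin'_apply', hsymm, ← sq] using hCS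

lemma PosDef.sq_dotProduct_le {ι : Type*} [Fintype ι] [DecidableEq ι] {M : Matrix ι ι ℝ}
    (hM : M.PosDef) (x y : ι → ℝ) :
    (x ⬝ᵥ y) ^ 2 ≤ (x ⬝ᵥ M⁻¹ *ᵥ x) * (y ⬝ᵥ M *ᵥ y) := by
  set z := M⁻¹ *ᵥ x
  have hz : M *ᵥ z = x := by
    rw [mulVec_mulVec, mul_nonsing_inv _ (isUnit_iff_ne_zero.2 hM.det_pos.ne'), one_mulVec]
  have h := hM.posSemidef.sq_dotProduct_mulVec_le z y
  rwa [hM.isHermitian.dotProduct_mulVec_comm, hz, dotProduct_comm z x] at h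

lemma PosDef.dotProduct_le_matNorm_inv_mul_sqrt {ι : Type*} [Fintype ι] [DecidableEq ι]
    {M : Matrix ι ι ℝ} (hM : M.PosDef) (x : ι → ℝ) {y : ι → ℝ} {D : ℝ}
    (hy : y ⬝ᵥ M *ᵥ y ≤ D) : x ⬝ᵥ y ≤ matNorm M⁻¹ x * √D := by
  have hx : 0 ≤ x ⬝ᵥ M⁻¹ *ᵥ x := by
    simpa using hM.inv.posSemidef.dotProduct_mulVec_nonneg x
  calc x ⬝ᵥ y ≤ √((x ⬝ᵥ y) ^ 2) := (le_abs_self _).trans (Real.sqrt_sq_eq_abs _).ge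
    _ ≤ √((x ⬝ᵥ M⁻¹ *ᵥ x) * D) :=
        Real.sqrt_le_sqrt ((hM.sq_dotProduct_le x y).trans (mul_le_mul_of_nonneg_left hy hx))
    _ = matNorm M⁻¹ x * √D := Real.sqrt_mul hx _

end Matrix

noncomputable def regularizedCovariance {ι κ : Type*} [Fintype ι] [DecidableEq κ] (c : ℝ)
    (μ : ι → ℝ) (φ : ι → κ → ℝ) (lam : ℝ) : Matrix κ κ ℝ :=
  c • ∑ i, μ i • vecMulVec (φ i) (φ i) + lam • 1

lemma dotProduct_regularizedCovariance_mulVec {ι κ : Type*} [Fintype ι] [Fintype κ]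
    [DecidableEq κ] (c : ℝ) (μ : ι → ℝ) (φ : ι → κ → ℝ) (lam : ℝ) (x : κ → ℝ) :
    x ⬝ᵥ regularizedCovariance c μ φ lam *ᵥ x
      = c * ∑ i, μ i * (φ i ⬝ᵥ x) ^ 2 + lam * (x ⬝ᵥ x) := by
  rw [regularizedCovariance]
  simp only [add_mulVec, smul_mulVec, sum_mulVec, vecMulVec_mulVec, one_mulVec, dotProduct_add,
    dotProduct_smul, dotProduct_sum, smul_eq_mul, op_smul_eq_smul]
  simp [dotProduct_comm x, sq]

lemma posDef_regularizedCovariance {ι κ : Type*} [Fintype ι] [Fintype κ] [DecidableEq κ]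
    {c : ℝ} {μ : ι → ℝ} (φ : ι → κ → ℝ) {lam : ℝ} (hc : 0 ≤ c) (hμ : ∀ i, 0 ≤ μ i)
    (hlam : 0 < lam) : (regularizedCovariance c μ φ lam).PosDef := by
  have hφ (i : ι) : (vecMulVec (φ i) (φ i)).PosSemidef := by
    simpa using posSemidef_vecMulVec_self_star (φ i)
  exact PosDef.posSemidef_add ((posSemidef_sum _ fun i _ => (hφ i).smul (hμ i)).smul hc)
    (PosDef.one.smul hlam)

lemma dotProduct_regularizedCovariance_mulVec_le {ι κ : Type*} [Fintype ι] [Fintype κ]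
    [DecidableEq κ] {c : ℝ} {μ : ι → ℝ} {φ : ι → κ → ℝ} {lam : ℝ} {x : κ → ℝ} {X Y : ℝ}
    (hc : 0 ≤ c) (hlam : 0 ≤ lam) (hX : ∑ i, μ i * (φ i ⬝ᵥ x) ^ 2 ≤ X) (hY : x ⬝ᵥ x ≤ Y) :
    x ⬝ᵥ regularizedCovariance c μ φ lam *ᵥ x ≤ c * X + lam * Y := by
  rw [dotProduct_regularizedCovariance_mulVec]
  gcongr

lemma sq_sum_mul_le_two_mul_sum_mul_sq_add {ι : Type*} [Fintype ι] {P Q l : ι → ℝ} {B : ℝ}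
    (hP : ∀ i, 0 ≤ P i) (hPsum : ∑ i, P i ≤ 1) (hl : ∀ i, l i ∈ Set.Icc 0 B) :
    (∑ i, Q i * l i) ^ 2 ≤ 2 * ∑ i, P i * l i ^ 2 + 2 * B ^ 2 * (∑ i, |Q i - P i|) ^ 2 := by
  have hsplit : ∑ i, Q i * l i = ∑ i, P i * l i + ∑ i, (Q i - P i) * l i := by
    rw [← sum_add_distrib]; exact sum_congr rfl fun i _ => by ring
  have hmain : (∑ i, P i * l i) ^ 2 ≤ ∑ i, P i * l i ^ 2 :=
    sq_sum_mul_le_sum_mul_sq _ (fun i _ => hP i) hPsum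
  have herr : |∑ i, (Q i - P i) * l i| ≤ B * ∑ i, |Q i - P i| :=
    calc |∑ i, (Q i - P i) * l i| ≤ ∑ i, |Q i - P i| * B := by
          refine (abs_sum_le_sum_abs _ _).trans (sum_le_sum fun i _ => ?_)
          rw [abs_mul, abs_of_nonneg (hl i).1]
          exact mul_le_mul_of_nonneg_left (hl i).2 (abs_nonneg _)
      _ = B * ∑ i, |Q i - P i| := by rw [← sum_mul, mul_comm]
  have herr2 := sq_le_sq' (neg_le_of_abs_le herr) (le_of_abs_le herr)
  rw [hsplit]
  nlinarith [sq_nonneg (∑ i, P i * l i - ∑ i, (Q i - P i) * l i)]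

lemma sum_mul_sum_mul_sum_le_sum_marginal_mul {S A : Type*} [Fintype S] [Fintype A] {μ : S × A → ℝ}
    {P : S × A → S → ℝ} {pol : S → A → ℝ} {f : S × A → ℝ} (hμ : ∀ p, 0 ≤ μ p)
    (hP : ∀ p s, 0 ≤ P p s) (hpol : ∀ s a, pol s a ≤ 1) (hf : ∀ p, 0 ≤ f p) :
    ∑ p, μ p * ∑ s, P p s * ∑ a, pol s a * f (s, a)
      ≤ ∑ p : S × A, (∑ p', μ p' * P p' p.1) * f p := by
  have hterm (p : S × A) (s : S) (a : A) :
      μ p * (P p s * (pol s a * f (s, a))) ≤ μ p * P p s * f (s, a) := by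
    rw [← mul_assoc]
    exact mul_le_mul_of_nonneg_left (mul_le_of_le_one_left (hf _) (hpol s a))
      (mul_nonneg (hμ p) (hP p s))
  calc ∑ p, μ p * ∑ s, P p s * ∑ a, pol s a * f (s, a)
      ≤ ∑ p, ∑ s, ∑ a, μ p * P p s * f (s, a) := by
        simp only [mul_sum]
        exact sum_le_sum fun p _ => sum_le_sum fun s _ => sum_le_sum fun a _ => hterm p s a
    _ = ∑ p : S × A, (∑ p', μ p' * P p' p.1) * f p := by
        rw [sum_comm, Fintype.sum_prod_type]
        simp only [sum_mul]
        exact sum_congr rfl fun s _ => sum_comm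

lemma sum_marginal_mul_eq_card_mul {S A : Type*} [Fintype S] [Fintype A] {μ ν : S × A → ℝ}
    {P : S × A → S → ℝ} (hν : ∀ p : S × A, ν p = 1 / (Fintype.card A : ℝ) * ∑ p', μ p' * P p' p.1)
    (f : S × A → ℝ) :
    ∑ p : S × A, (∑ p', μ p' * P p' p.1) * f p = Fintype.card A * ∑ p, ν p * f p := by
  rw [mul_sum]
  refine sum_congr rfl fun p _ => ?_
  have hA : (Fintype.card A : ℝ) ≠ 0 := Nat.cast_ne_zero.2 (Fintype.card_pos_iff.2 ⟨p.2⟩).ne'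
  rw [hν, ← mul_assoc, ← mul_assoc, mul_one_div_cancel hA, one_mul]

lemma sum_mul_sq_sum_mul_sum_policy_le {S A : Type*} [Fintype S] [Fintype A]
    {μ ν : S × A → ℝ} {P Q : S × A → S → ℝ} {pol : S → A → ℝ} {g : S × A → ℝ} {B : ℝ}
    (hμ : ∀ p, 0 ≤ μ p) (hP : ∀ p s, 0 ≤ P p s) (hPsum : ∀ p, ∑ s, P p s = 1)
    (hν : ∀ p : S × A, ν p = 1 / (Fintype.card A : ℝ) * ∑ p', μ p' * P p' p.1)
    (hpol : ∀ s a, 0 ≤ pol s a) (hpolsum : ∀ s, ∑ a, pol s a = 1) (hB : 0 ≤ B)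
    (hg : ∀ p, g p ∈ Set.Icc 0 B) {ζ : ℝ} (hQP : ∑ p, μ p * (∑ s, |Q p s - P p s|) ^ 2 ≤ ζ) :
    ∑ p, μ p * (∑ s, Q p s * ∑ a, pol s a * g (s, a)) ^ 2
      ≤ 2 * (Fintype.card A * ∑ p, ν p * g p ^ 2) + 2 * B ^ 2 * ζ := by
  have hl (s : S) : ∑ a, pol s a * g (s, a) ∈ Set.Icc 0 B :=
    sum_mul_mem_Icc _ (fun a _ => hpol s a) (hpolsum s).le hB fun a _ => hg (s, a)
  have hl2 (s : S) : (∑ a, pol s a * g (s, a)) ^ 2 ≤ ∑ a, pol s a * g (s, a) ^ 2 :=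
    sq_sum_mul_le_sum_mul_sq _ (fun a _ => hpol s a) (hpolsum s).le
  have hpol1 (s : S) (a : A) : pol s a ≤ 1 :=
    hpolsum s ▸ single_le_sum (fun a _ => hpol s a) (mem_univ a)
  calc ∑ p, μ p * (∑ s, Q p s * ∑ a, pol s a * g (s, a)) ^ 2
      ≤ ∑ p, μ p * (2 * ∑ s, P p s * (∑ a, pol s a * g (s, a)) ^ 2
          + 2 * B ^ 2 * (∑ s, |Q p s - P p s|) ^ 2) := by
        gcongr with p
        · exact hμ p
        · exact sq_sum_mul_le_two_mul_sum_mul_sq_add (hP p) (hPsum p).le hl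
    _ ≤ ∑ p, μ p * (2 * ∑ s, P p s * ∑ a, pol s a * g (s, a) ^ 2
          + 2 * B ^ 2 * (∑ s, |Q p s - P p s|) ^ 2) := by
        gcongr with p _ s
        · exact hμ p
        · exact hP p s
        · exact hl2 s
    _ = 2 * ∑ p, μ p * ∑ s, P p s * ∑ a, pol s a * g (s, a) ^ 2
          + 2 * B ^ 2 * ∑ p, μ p * (∑ s, |Q p s - P p s|) ^ 2 := by
        rw [mul_sum, mul_sum, ← sum_add_distrib]
        exact sum_congr rfl fun p _ => by ring
    _ ≤ _ := by
        have := sum_mul_sum_mul_sum_le_sum_marginal_mul hμ hP hpol1 fun p => sq_nonneg (g p)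
        rw [sum_marginal_mul_eq_card_mul hν] at this
        gcongr

lemma dotProduct_self_le_of_forall_l2norm_le {S ι : Type*} [Fintype S] [Fintype ι]
    {w : S → ι → ℝ} {l : S → ℝ} {B c : ℝ} (hB : 0 < B)
    (hw : ∀ l : S → ℝ, (∀ s, l s ∈ Set.Icc (0 : ℝ) 1) →
      l2norm (fun j => ∑ s, w s j * l s) ≤ c)
    (hl : ∀ s, l s ∈ Set.Icc 0 B) :
    (fun j => ∑ s, w s j * l s) ⬝ᵥ (fun j => ∑ s, w s j * l s) ≤ (B * c) ^ 2 := by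
  have h := dotProduct_self_le_sq_of_l2norm_le (hw (fun s => l s / B) fun s =>
    ⟨div_nonneg (hl s).1 hB.le, div_le_one_of_le₀ (hl s).2 hB.le⟩)
  have hscale : (fun j => ∑ s, w s j * l s) = B • fun j => ∑ s, w s j * (l s / B) := by
    ext j
    simp only [Pi.smul_apply, smul_eq_mul, mul_sum]
    exact sum_congr rfl fun s _ => by field_simp
  rw [hscale, smul_dotProduct, dotProduct_smul, smul_eq_mul, smul_eq_mul, ← mul_assoc, mul_pow,
    ← sq]
  exact mul_le_mul_of_nonneg_left h (sq_nonneg B)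

lemma sum_mul_eq_of_eq_sum_transition {S A : Type*} [Fintype S] [Fintype A] (q q' : S × A → ℝ)
    (Q : S × A → S → ℝ) (pol : S → A → ℝ) (g : S × A → ℝ)
    (hq : ∀ p : S × A, q p = ∑ p', q' p' * Q p' p.1 * pol p.1 p.2) :
    ∑ p, q p * g p = ∑ p', q' p' * ∑ s, Q p' s * ∑ a, pol s a * g (s, a) := by
  simp only [hq, sum_mul]
  rw [sum_comm]
  refine sum_congr rfl fun p' _ => ?_
  simp only [Fintype.sum_prod_type, mul_sum]
  exact sum_congr rfl fun s _ => sum_congr rfl fun a _ => by ring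

theorem one_step_back_learned_model_general
    {S A : Type*} [Fintype S] [Fintype A]
    {d n : ℕ}
    {lam B ζ : ℝ} (hlam : 0 < lam) (hB : 0 < B)
    (P : S × A → S → ℝ) (hPpos : ∀ p s', 0 ≤ P p s') (hPsum : ∀ p, ∑ s', P p s' = 1)
    (φhat : S × A → Fin d → ℝ)
    (what : S → Fin d → ℝ)
    (Phat : S × A → S → ℝ) (hPhat : ∀ p s', Phat p s' = ∑ j, φhat p j * what s' j)
    (hPhatpos : ∀ p s', 0 ≤ Phat p s') (hPhatsum : ∀ p, ∑ s', Phat p s' ≤ 1)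
    (hwhat : ∀ l : S → ℝ, (∀ s', l s' ∈ Set.Icc (0 : ℝ) 1) →
      l2norm (fun j => ∑ s', what s' j * l s') ≤ Real.sqrt d)
    (μ : S × A → ℝ) (hμpos : ∀ p, 0 ≤ μ p)
    (hμTV : ∑ p, μ p * (∑ s', |Phat p s' - P p s'|) ^ 2 ≤ ζ)
    (Sighat : Matrix (Fin d) (Fin d) ℝ)
    (hSighat : Sighat = (n : ℝ) • (∑ p, μ p • vecMulVec (φhat p) (φhat p)) +
      lam • (1 : Matrix (Fin d) (Fin d) ℝ))
    (ν : S × A → ℝ)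
    (hν : ∀ p : S × A, ν p = (1 / (Fintype.card A : ℝ)) * ∑ p', μ p' * P p' p.1)
    (q' : S × A → ℝ) (hq'pos : ∀ p, 0 ≤ q' p)
    (pol : S → A → ℝ) (hpolpos : ∀ s a, 0 ≤ pol s a) (hpolsum : ∀ s, ∑ a, pol s a = 1)
    (q : S × A → ℝ)
    (hq : ∀ p : S × A, q p = ∑ p', q' p' * Phat p' p.1 * pol p.1 p.2)
    (g : S × A → ℝ) (hg : ∀ p, g p ∈ Set.Icc (0 : ℝ) B) :
    (∑ p, q p * g p) ≤
      ∑ p, q' p *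
        min (matNorm Sighat⁻¹ (φhat p) *
          Real.sqrt (2 * (n : ℝ) * (Fintype.card A : ℝ) * (∑ p', ν p' * g p' ^ 2)
            + B ^ 2 * lam * d + 2 * (n : ℝ) * B ^ 2 * ζ)) B := by
  set l : S → ℝ := fun s => ∑ a, pol s a * g (s, a)
  set θ : Fin d → ℝ := fun j => ∑ s, what s j * l s
  have hl (s : S) : l s ∈ Set.Icc 0 B :=
    sum_mul_mem_Icc _ (fun a _ => hpolpos s a) (hpolsum s).le hB.le fun a _ => hg (s, a)
  have hφθ (p : S × A) : φhat p ⬝ᵥ θ = ∑ s, Phat p s * l s := by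
    rw [dotProduct_sum_mul]
    simp only [hPhat, dotProduct]
  have hmodel : ∑ p, μ p * (φhat p ⬝ᵥ θ) ^ 2
      ≤ 2 * (Fintype.card A * ∑ p, ν p * g p ^ 2) + 2 * B ^ 2 * ζ := by
    simpa only [hφθ] using
      sum_mul_sq_sum_mul_sum_policy_le hμpos hPpos hPsum hν hpolpos hpolsum hB.le hg hμTV
  have hθθ : θ ⬝ᵥ θ ≤ B ^ 2 * d := by
    simpa [mul_pow] using dotProduct_self_le_of_forall_l2norm_le hB hwhat hl
  have hθ : θ ⬝ᵥ Sighat *ᵥ θ ≤ 2 * (n : ℝ) * (Fintype.card A : ℝ) * (∑ p', ν p' * g p' ^ 2)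
      + B ^ 2 * lam * d + 2 * (n : ℝ) * B ^ 2 * ζ := by
    rw [hSighat, ← regularizedCovariance]
    refine (dotProduct_regularizedCovariance_mulVec_le (Nat.cast_nonneg n) hlam.le hmodel
      hθθ).trans_eq (by ring)
  have hPD : Sighat.PosDef :=
    hSighat ▸ posDef_regularizedCovariance φhat (Nat.cast_nonneg n) hμpos hlam
  rw [sum_mul_eq_of_eq_sum_transition q q' Phat pol g hq]
  refine sum_le_sum fun p _ => mul_le_mul_of_nonneg_left (le_min ?_ ?_) (hq'pos p)
  · exact hφθ p ▸ hPD.dotProduct_le_matNorm_inv_mul_sqrt (φhat p) hθ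
  · exact sum_mul_le_of_sum_le_one _ (fun s _ => hPhatpos p s) (hPhatsum p) hB.le
      fun s _ => (hl s).2

/-- One-step back inequality for the learned low-rank transition model. -/
theorem one_step_back_learned_model
    {S A : Type*} [Fintype S] [Nonempty S] [Fintype A] [Nonempty A]
    {d n : ℕ} (hd : 1 ≤ d) (hn : 1 ≤ n)
    {lam B ζ : ℝ} (hlam : 0 < lam) (hB : 0 < B) (hζ : 0 ≤ ζ)
    (P : S × A → S → ℝ) (hPpos : ∀ p s', 0 ≤ P p s') (hPsum : ∀ p, ∑ s', P p s' = 1)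
    (φhat : S × A → Fin d → ℝ) (hφhat : ∀ p, l2norm (φhat p) ≤ 1)
    (what : S → Fin d → ℝ)
    (Phat : S × A → S → ℝ) (hPhat : ∀ p s', Phat p s' = ∑ j, φhat p j * what s' j)
    (hPhatpos : ∀ p s', 0 ≤ Phat p s') (hPhatsum : ∀ p, ∑ s', Phat p s' ≤ 1)
    (hwhat : ∀ l : S → ℝ, (∀ s', l s' ∈ Set.Icc (0 : ℝ) 1) →
      l2norm (fun j => ∑ s', what s' j * l s') ≤ Real.sqrt d)
    (μ : S × A → ℝ) (hμpos : ∀ p, 0 ≤ μ p) (hμsum : ∑ p, μ p = 1)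
    (hμTV : ∑ p, μ p * (∑ s', |Phat p s' - P p s'|) ^ 2 ≤ ζ)
    (Sighat : Matrix (Fin d) (Fin d) ℝ)
    (hSighat : Sighat = (n : ℝ) • (∑ p, μ p • vecMulVec (φhat p) (φhat p)) +
      lam • (1 : Matrix (Fin d) (Fin d) ℝ))
    (ν : S × A → ℝ)
    (hν : ∀ p : S × A, ν p = (1 / (Fintype.card A : ℝ)) * ∑ p', μ p' * P p' p.1)
    (q' : S × A → ℝ) (hq'pos : ∀ p, 0 ≤ q' p) (hq'sum : ∑ p, q' p = 1)
    (pol : S → A → ℝ) (hpolpos : ∀ s a, 0 ≤ pol s a) (hpolsum : ∀ s, ∑ a, pol s a = 1)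
    (q : S × A → ℝ)
    (hq : ∀ p : S × A, q p = ∑ p', q' p' * Phat p' p.1 * pol p.1 p.2)
    (g : S × A → ℝ) (hg : ∀ p, g p ∈ Set.Icc (0 : ℝ) B) :
    (∑ p, q p * g p) ≤
      ∑ p, q' p *
        min (matNorm Sighat⁻¹ (φhat p) *
          Real.sqrt (2 * (n : ℝ) * (Fintype.card A : ℝ) * (∑ p', ν p' * g p' ^ 2)
            + B ^ 2 * lam * d + 2 * (n : ℝ) * B ^ 2 * ζ)) B :=
  one_step_back_learned_model_general hlam hB P hPpos hPsum φhat what Phat hPhat hPhatpos hPhatsum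
    hwhat μ hμpos hμTV Sighat hSighat ν hν q' hq'pos pol hpolpos hpolsum q hq g hg
end

section
/- Let M ≥ 1, let S_1,…,S_M and A_1,…,A_M be finite nonempty sets, S := S_1×⋯×S_M, A := A_1×⋯×A_M, and for T ⊆ {1,…,M} write s[T] := (s_j)_{j∈T}, a[T] := (a_j)_{j∈T}, S[T] := Π_{j∈T}S_j, A[T] := Π_{j∈T}A_j. Let d, n ≥ 1, λ > 0, B > 0. For each j let Z_j ⊆ {1,…,M}, φ_j : S[Z_j]×A_j → ℝ^d with ‖φ_j(·)‖₂ ≤ 1, and w_j : S_j → ℝ^d such that P_j(s′_j|s[Z_j],a_j) := ⟨φ_j(s[Z_j],a_j), w_j(s′_j)⟩ is a probability distribution over s′_j for every (s[Z_j],a_j); define P(s′|s,a) := Π_{j=1}^M P_j(s′_j|s[Z_j],a_j). Fix i, set W_i := ∪_{j∈Z_i} Z_j, and assume that for every G : S[W_i] → [0,1] one has ‖ Σ_{z∈S[W_i]} (⊗_{k∈W_i} w_k(z_k))·G(z) ‖₂ ≤ √(d^{|W_i|}) (Kronecker products taken in a fixed order). Define φ̃_i(s,a) := ⊗_{k∈W_i}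 φ_k(s[Z_k], a_k) ∈ ℝ^{d^{|W_i|}}. Let μ be a distribution on S×A, set Σ̃ := n·Σ_{(s,a)} μ(s,a)·φ̃_i(s,a)φ̃_i(s,a)ᵀ + λ·I_{d^{|W_i|}}, and define ν on S×A by ν(s,a) := (1/|A|)·Σ_{(s̃,ã)} μ(s̃,ã)·P(s|s̃,ã). Let q′ be any distribution on S×A, π : S → Δ(A) a policy, and q(s,a) := Σ_{(s̃,ã)} q′(s̃,ã)·P(s|s̃,ã)·π(a|s). Then for every g : S[W_i]×A[Z_i] → [0,B]: E_{(s,a)∼q}[ g(s[W_i], a[Z_i]) ] ≤ |A[Z_i]| · E_{(s̃,ã)∼q′}[ ‖φ̃_i(s̃,ã)‖_{Σ̃^{-1}} ] · √( n·E_{(s,a)∼ν}[ g(s[W_i],a[Z_i])² ] + B²·λ·d^{|W_i|} ). -/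
open Finset Matrix

/-!
Since `g ≥ 0`, the policy's choice of the local action may be replaced by a sum over all
`b ∈ A[Z_i]` of `E_{(s̃,ã)∼q'} E_{s∼P(·|s̃,ã)} g(s[W_i], b)`. Since `P` is a product
kernel whose factors outside `W_i` sum to one, the inner expectation depends only on the
`W_i`-marginal, and the low-rank form of the factors makes it linear in the features:
it equals `⟨φ̃_i(s̃,ã), θ_b⟩` with `θ_b = Σ_z (⊗_k w_k(z_k)) g(z, b)`. Cauchy–Schwarz in the
`Σ̃`-geometry bounds it by `‖φ̃_i‖_{Σ̃⁻¹} ‖θ_b‖_{Σ̃}`; Jensen gives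
`‖θ_b‖²_{Σ̃} ≤ n E_μ E_P g(·, b)² + λ ‖θ_b‖²`, and the normalization of `w` gives
`‖θ_b‖² ≤ B² d^{|W_i|}`. Finally Cauchy–Schwarz over `b`, together with the fact that `ν` is
`μ` pushed through `P` followed by a uniformly random action (whose restriction to `Z_i` is
again uniform), turns `Σ_b ‖θ_b‖_{Σ̃}` into `|A[Z_i]| √(n E_ν g² + B² λ d^{|W_i|})`.
-/

theorem sq_sum_mul_le_sum_mul_sq_s4 {α : Type*} [Fintype α] {w : α → ℝ} (hw : ∀ a, 0 ≤ w a)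
    (hw1 : ∑ a, w a = 1) (f : α → ℝ) : (∑ a, w a * f a) ^ 2 ≤ ∑ a, w a * f a ^ 2 := by
  simpa using (even_two.convexOn_pow (𝕜 := ℝ)).map_sum_le (t := univ) (p := f)
    (fun a _ => hw a) hw1 (fun a _ => Set.mem_univ _)

theorem sum_le_card_mul_sqrt_of_sq_le {β : Type*} [Fintype β] {m a : β → ℝ}
    (hma : ∀ b, m b ^ 2 ≤ a b) :
    ∑ b, m b ≤ Fintype.card β * Real.sqrt ((Fintype.card β : ℝ)⁻¹ * ∑ b, a b) := by
  set K : ℝ := (Fintype.card β : ℝ)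
  have hK : 0 ≤ K := Nat.cast_nonneg _
  have hsq : (∑ b, m b) ^ 2 ≤ K * ∑ b, a b := by
    refine (sq_sum_le_card_mul_sum_sq (s := univ)).trans ?_
    rw [card_univ]
    exact mul_le_mul_of_nonneg_left (sum_le_sum fun b _ => hma b) hK
  calc ∑ b, m b ≤ Real.sqrt (K * ∑ b, a b) := Real.le_sqrt_of_sq_le hsq
    _ = K * Real.sqrt (K⁻¹ * ∑ b, a b) := by
      rw [← mul_self_mul_inv K, mul_assoc, Real.sqrt_mul (mul_self_nonneg K),
        Real.sqrt_mul_self hK, mul_self_mul_inv]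

theorem sum_mul_comp_le_sum {α β : Type*} [Fintype α] [Fintype β] {π : α → ℝ}
    (hπ : ∀ a, 0 ≤ π a) (hπ1 : ∑ a, π a ≤ 1) (r : α → β) {g : β → ℝ} (hg : ∀ b, 0 ≤ g b) :
    ∑ a, π a * g (r a) ≤ ∑ b, g b :=
  calc ∑ a, π a * g (r a) ≤ ∑ a, π a * ∑ b, g b := by
        gcongr with a
        · exact hπ a
        · exact single_le_sum (fun b _ => hg b) (mem_univ _)
    _ ≤ ∑ b, g b := by
        rw [← sum_mul]
        exact mul_le_of_le_one_left (sum_nonneg fun b _ => hg b) hπ1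

theorem dotProduct_le_matNorm_inv_mul_matNorm {ι : Type*} [Fintype ι] [DecidableEq ι]
    {G : Matrix ι ι ℝ} (hG : G.PosDef) (x y : ι → ℝ) :
    x ⬝ᵥ y ≤ matNorm G⁻¹ x * matNorm G y := by
  have hunit : IsUnit G.det := (Matrix.isUnit_iff_isUnit_det G).1 hG.isUnit
  have hsymm : Gᵀ = G := hG.isHermitian.eq
  -- Cauchy–Schwarz for the form `(u, v) ↦ uᵀ G⁻¹ v`, applied to `x` and `G y`
  set F : LinearMap.BilinForm ℝ (ι → ℝ) := Matrix.toLinearMap₂' ℝ G⁻¹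
  have hF : ∀ u v, F u v = u ⬝ᵥ G⁻¹ *ᵥ v := Matrix.toLinearMap₂'_apply' _
  have hcancel : G⁻¹ *ᵥ (G *ᵥ y) = y := by
    rw [mulVec_mulVec, nonsing_inv_mul _ hunit, one_mulVec]
  have hxy : F x (G *ᵥ y) = x ⬝ᵥ y := by rw [hF, hcancel]
  have hyx : F (G *ᵥ y) x = x ⬝ᵥ y := by
    rw [hF, dotProduct_mulVec, ← vecMul_transpose, hsymm, vecMul_vecMul,
      mul_nonsing_inv _ hunit, vecMul_one, dotProduct_comm]
  have hyy : F (G *ᵥ y) (G *ᵥ y) = y ⬝ᵥ G *ᵥ y := by rw [hF, hcancel, dotProduct_comm]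
  have hnonneg (u : ι → ℝ) : 0 ≤ u ⬝ᵥ G⁻¹ *ᵥ u := by
    simpa using hG.inv.posSemidef.dotProduct_mulVec_nonneg u
  have hcs := F.apply_mul_apply_le_of_forall_zero_le (fun u => (hF u u).symm ▸ hnonneg u)
    x (G *ᵥ y)
  rw [hxy, hyx, hyy, hF] at hcs
  rw [matNorm, matNorm, ← Real.sqrt_mul (hnonneg x)]
  exact Real.le_sqrt_of_sq_le (by simpa [sq] using hcs)

section RegularizedCovariance

variable {α ι : Type*} [Fintype α] [Fintype ι] [DecidableEq ι]

noncomputable def regCov (c lam : ℝ) (μ : α → ℝ) (x : α → ι → ℝ) : Matrix ι ι ℝ :=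
  c • ∑ p, μ p • vecMulVec (x p) (x p) + lam • 1

theorem dotProduct_regCov_mulVec (c lam : ℝ) (μ : α → ℝ) (x : α → ι → ℝ) (v : ι → ℝ) :
    v ⬝ᵥ regCov c lam μ x *ᵥ v = c * ∑ p, μ p * (x p ⬝ᵥ v) ^ 2 + lam * ∑ i, v i ^ 2 := by
  simp only [regCov, add_mulVec, smul_mulVec, sum_mulVec, vecMulVec_mulVec, one_mulVec,
    dotProduct_add, dotProduct_smul, dotProduct_sum, smul_eq_mul]
  simp [dotProduct, sq, mul_comm, mul_left_comm, mul_sum]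

theorem posDef_regCov {c lam : ℝ} (hc : 0 ≤ c) (hlam : 0 < lam) {μ : α → ℝ}
    (hμ : ∀ p, 0 ≤ μ p) (x : α → ι → ℝ) : (regCov c lam μ x).PosDef := by
  refine PosDef.posSemidef_add (PosSemidef.smul ?_ hc) (PosDef.one.smul hlam)
  exact posSemidef_sum _ fun p _ => (posSemidef_vecMulVec_self_star (x p)).smul (hμ p)

end RegularizedCovariance

-- `ℝ^{d^{|W|}}` is modelled as `W → Fin d`; `tensorVec u` is the Kronecker product `⊗ₖ u k`.
def tensorVec {κ ι : Type*} [Fintype κ] (u : κ → ι → ℝ) : (κ → ι) → ℝ := fun f => ∏ k, u k (f k)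

section Tensor

variable {κ ι : Type*} [Fintype κ] [DecidableEq κ] [Fintype ι]

theorem prod_dotProduct_eq_tensorVec_dotProduct (u v : κ → ι → ℝ) :
    ∏ k, u k ⬝ᵥ v k = tensorVec u ⬝ᵥ tensorVec v := by
  simp only [dotProduct, Fintype.prod_sum, tensorVec, Finset.prod_mul_distrib]

theorem sum_prod_dotProduct_mul {T : κ → Type*} [∀ k, Fintype (T k)] (u : κ → ι → ℝ)
    (v : ∀ k, T k → ι → ℝ) (f : (∀ k, T k) → ℝ) :
    ∑ z, (∏ k, u k ⬝ᵥ v k (z k)) * f z =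
      tensorVec u ⬝ᵥ ∑ z, f z • tensorVec (fun k => v k (z k)) := by
  simp only [prod_dotProduct_eq_tensorVec_dotProduct, dotProduct_sum, dotProduct_smul,
    smul_eq_mul, mul_comm]

end Tensor

section Marginals

variable {ι : Type*} [Fintype ι] [DecidableEq ι]

theorem sum_prod_mul_comp_restrict {S : ι → Type*} [∀ i, Fintype (S i)] (W : Finset ι)
    (Q : ∀ i, S i → ℝ) (hQ : ∀ i ∉ W, ∑ x, Q i x = 1) (f : (∀ k : {k // k ∈ W}, S k) → ℝ) :
    ∑ s : ∀ i, S i, (∏ i, Q i (s i)) * f (fun k => s k) =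
      ∑ z : ∀ k : {k // k ∈ W}, S k, (∏ k : {k // k ∈ W}, Q k (z k)) * f z := by
  set e := Equiv.piEquivPiSubtypeProd (· ∈ W) S
  rw [← e.symm.sum_comp, Fintype.sum_prod_type]
  refine sum_congr rfl fun z _ => ?_
  calc ∑ y, (∏ i, Q i (e.symm (z, y) i)) * f (fun k => e.symm (z, y) k)
      = ∑ y : ∀ k : {k // k ∉ W}, S k,
          (∏ k : {k // k ∈ W}, Q k (z k)) * f z * ∏ k : {k // k ∉ W}, Q k (y k) := by
        refine sum_congr rfl fun y _ => ?_
        obtain ⟨hz, hy⟩ := Prod.ext_iff.1 (e.apply_symm_apply (z, y))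
        change (fun k : {k // k ∈ W} => e.symm (z, y) k) = z at hz
        change (fun k : {k // k ∉ W} => e.symm (z, y) k) = y at hy
        rw [← Fintype.prod_subtype_mul_prod_subtype (· ∈ W), hz]
        simp only [congrFun hz, congrFun hy]
        rw [mul_right_comm]
        -- the two sides carry different `Fintype` instances on `{k // k ∈ W}`
        congr 4
        exact Subsingleton.elim _ _
    _ = (∏ k : {k // k ∈ W}, Q k (z k)) * f z := by
        have hone : ∏ k : {k // k ∉ W}, ∑ x, Q k x = 1 :=
          Fintype.prod_eq_one _ fun k => hQ k k.2
        rw [← mul_sum, ← Fintype.prod_sum, hone, mul_one]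

theorem sum_prod_mul_comp_restrict_eq_dotProduct {κ : Type*} [Fintype κ] {S : ι → Type*}
    [∀ i, Fintype (S i)] (W : Finset ι) {Q : ∀ i, S i → ℝ} (hQ : ∀ i ∉ W, ∑ x, Q i x = 1)
    (u : ι → κ → ℝ) (v : ∀ i, S i → κ → ℝ) (huv : ∀ i ∈ W, ∀ x, Q i x = u i ⬝ᵥ v i x)
    (f : (∀ k : {k // k ∈ W}, S k) → ℝ) :
    ∑ s : ∀ i, S i, (∏ i, Q i (s i)) * f (fun k => s k) =
      tensorVec (fun k : {k // k ∈ W} => u k) ⬝ᵥ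
        ∑ z, f z • tensorVec (fun k : {k // k ∈ W} => v k (z k)) := by
  rw [sum_prod_mul_comp_restrict W Q hQ f, ← sum_prod_dotProduct_mul]
  simp only [fun (k : {k // k ∈ W}) x => huv k k.2 x]

theorem card_inv_mul_sum_comp_restrict {A : ι → Type*} [∀ i, Fintype (A i)]
    [∀ i, Nonempty (A i)] (Z : Finset ι) (G : (∀ j : {j // j ∈ Z}, A j) → ℝ) :
    (Fintype.card (∀ j, A j) : ℝ)⁻¹ * ∑ a : ∀ j, A j, G (fun j => a j) =
      (Fintype.card (∀ j : {j // j ∈ Z}, A j) : ℝ)⁻¹ * ∑ b, G b := by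
  set e := Equiv.piEquivPiSubtypeProd (· ∈ Z) A
  have hrestrict (b c) : (fun j : {j // j ∈ Z} => e.symm (b, c) j) = b :=
    congrArg Prod.fst (e.apply_symm_apply (b, c))
  have hC : (Fintype.card (∀ j : {j // j ∉ Z}, A j) : ℝ) ≠ 0 := by positivity
  rw [← e.symm.sum_comp, Fintype.sum_prod_type, Fintype.card_congr e, Fintype.card_prod]
  simp only [hrestrict, sum_const, card_univ, nsmul_eq_mul, ← mul_sum, Nat.cast_mul]
  field_simp

end Marginals

theorem sum_sq_sum_smul_le {Z κ : Type*} [Fintype Z] [Fintype κ] (ψ : Z → κ → ℝ) {B D : ℝ}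
    (hB : 0 < B) (hD : 0 ≤ D)
    (hψ : ∀ G : Z → ℝ, (∀ z, G z ∈ Set.Icc 0 1) →
      l2norm (fun i => ∑ z, ψ z i * G z) ≤ Real.sqrt D)
    {g : Z → ℝ} (hg : ∀ z, g z ∈ Set.Icc 0 B) :
    ∑ i, (∑ z, g z • ψ z) i ^ 2 ≤ B ^ 2 * D := by
  have hG := hψ (fun z => g z / B) fun z =>
    ⟨div_nonneg (hg z).1 hB.le, (div_le_one hB).2 (hg z).2⟩
  rw [l2norm, Real.sqrt_le_sqrt_iff hD] at hG
  have hscale (i) : (∑ z, g z • ψ z) i = B * ∑ z, ψ z i * (g z / B) := by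
    simp only [Finset.sum_apply, Pi.smul_apply, smul_eq_mul, mul_sum]
    exact sum_congr rfl fun z _ => by field_simp
  simp only [hscale, mul_pow, ← mul_sum]
  gcongr

section Kernels

variable {X Y α : Type*} [Fintype X] [Fintype Y] [Fintype α]

theorem sum_kernel_policy_mul (q : X → ℝ) (P : X → Y → ℝ) (π G : Y → α → ℝ) :
    ∑ p : Y × α, (∑ x, q x * P x p.1 * π p.1 p.2) * G p.1 p.2 =
      ∑ x, q x * ∑ y, P x y * ∑ a, π y a * G y a := by
  simp only [sum_mul]
  rw [sum_comm]
  refine sum_congr rfl fun x _ => ?_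
  simp only [Fintype.sum_prod_type, mul_sum]
  exact sum_congr rfl fun y _ => sum_congr rfl fun a _ => by ring

theorem sum_kernel_policy_mul_le {β : Type*} [Fintype β] {q : X → ℝ} (hq : ∀ x, 0 ≤ q x)
    {P : X → Y → ℝ} (hP : ∀ x y, 0 ≤ P x y) {π : Y → α → ℝ} (hπ : ∀ y a, 0 ≤ π y a)
    (hπ1 : ∀ y, ∑ a, π y a = 1) (r : α → β) {h : Y → β → ℝ} (hh : ∀ y b, 0 ≤ h y b) :
    ∑ p : Y × α, (∑ x, q x * P x p.1 * π p.1 p.2) * h p.1 (r p.2) ≤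
      ∑ x, q x * ∑ b, ∑ y, P x y * h y b :=
  calc ∑ p : Y × α, (∑ x, q x * P x p.1 * π p.1 p.2) * h p.1 (r p.2)
      = ∑ x, q x * ∑ y, P x y * ∑ a, π y a * h y (r a) :=
        sum_kernel_policy_mul q P π fun y a => h y (r a)
    _ ≤ ∑ x, q x * ∑ y, P x y * ∑ b, h y b := by
      gcongr with x _ y
      · exact hq x
      · exact hP x y
      · exact sum_mul_comp_le_sum (hπ y) (hπ1 y).le r (hh y)
    _ = ∑ x, q x * ∑ b, ∑ y, P x y * h y b := by
      simp only [mul_sum]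
      exact sum_congr rfl fun x _ => sum_comm

theorem sum_uniform_kernel_mul (μ : X → ℝ) (P : X → Y → ℝ) (G : Y → α → ℝ) :
    ∑ p : Y × α, (1 / (Fintype.card α : ℝ) * ∑ x, μ x * P x p.1) * G p.1 p.2 =
      ∑ x, μ x * ∑ y, P x y * ((Fintype.card α : ℝ)⁻¹ * ∑ a, G y a) := by
  simp only [mul_sum, sum_mul]
  rw [sum_comm]
  refine sum_congr rfl fun x _ => ?_
  simp only [Fintype.sum_prod_type]
  exact sum_congr rfl fun y _ => sum_congr rfl fun a _ => by ring

end Kernels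

theorem sum_uniform_kernel_mul_comp_restrict {X Y ι : Type*} [Fintype X] [Fintype Y] [Fintype ι]
    [DecidableEq ι] {A : ι → Type*} [∀ i, Fintype (A i)] [∀ i, Nonempty (A i)] (Z : Finset ι)
    (μ : X → ℝ) (P : X → Y → ℝ) (G : Y → (∀ j : {j // j ∈ Z}, A j) → ℝ) :
    ∑ p : Y × (∀ j, A j), (1 / (Fintype.card (∀ j, A j) : ℝ) * ∑ x, μ x * P x p.1) *
        G p.1 (fun j => p.2 j) =
      ∑ x, μ x * ∑ y, P x y * ((Fintype.card (∀ j : {j // j ∈ Z}, A j) : ℝ)⁻¹ * ∑ b, G y b) := by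
  rw [sum_uniform_kernel_mul μ P fun y (a : ∀ j, A j) => G y fun j => a j]
  simp only [card_inv_mul_sum_comp_restrict]

section OneStepBack

variable {X Y β ι : Type*} [Fintype X] [Fintype Y] [Fintype β] [Fintype ι] [DecidableEq ι]
  {P : X → Y → ℝ} {φ : X → ι → ℝ} {μ : X → ℝ} {c lam D : ℝ}

theorem matNorm_regCov_sq_le (hP : ∀ x y, 0 ≤ P x y) (hP1 : ∀ x, ∑ y, P x y = 1)
    {h : Y → ℝ} {θ : ι → ℝ} (hlin : ∀ x, ∑ y, P x y * h y = φ x ⬝ᵥ θ) (hc : 0 ≤ c)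
    (hlam : 0 ≤ lam) (hμ : ∀ x, 0 ≤ μ x) (hθ : ∑ i, θ i ^ 2 ≤ D) :
    matNorm (regCov c lam μ φ) θ ^ 2 ≤ c * ∑ x, μ x * ∑ y, P x y * h y ^ 2 + lam * D := by
  have hquad := dotProduct_regCov_mulVec c lam μ φ θ
  have hnonneg : 0 ≤ θ ⬝ᵥ regCov c lam μ φ *ᵥ θ := by
    rw [hquad]
    exact add_nonneg (mul_nonneg hc (sum_nonneg fun x _ => mul_nonneg (hμ x) (sq_nonneg _)))
      (mul_nonneg hlam (sum_nonneg fun i _ => sq_nonneg _))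
  rw [matNorm, Real.sq_sqrt hnonneg, hquad]
  gcongr with x
  · exact hμ x
  · rw [← hlin]
    exact sq_sum_mul_le_sum_mul_sq_s4 (hP x) (hP1 x) h

theorem one_step_back_of_linear [Nonempty β] (hP : ∀ x y, 0 ≤ P x y) (hP1 : ∀ x, ∑ y, P x y = 1)
    {h : Y → β → ℝ} {θ : β → ι → ℝ} (hlin : ∀ x b, ∑ y, P x y * h y b = φ x ⬝ᵥ θ b)
    (hc : 0 ≤ c) (hlam : 0 < lam) (hμ : ∀ x, 0 ≤ μ x) (hθ : ∀ b, ∑ i, θ b i ^ 2 ≤ D)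
    {q : X → ℝ} (hq : ∀ x, 0 ≤ q x) :
    ∑ x, q x * ∑ b, ∑ y, P x y * h y b ≤
      Fintype.card β * (∑ x, q x * matNorm (regCov c lam μ φ)⁻¹ (φ x)) *
        Real.sqrt (c * ∑ x, μ x * ∑ y, P x y * ((Fintype.card β : ℝ)⁻¹ * ∑ b, h y b ^ 2)
          + lam * D) := by
  set G := regCov c lam μ φ
  have hK : (Fintype.card β : ℝ) ≠ 0 := by positivity
  have hθG : ∑ b, matNorm G (θ b) ≤ Fintype.card β * Real.sqrt
      (c * ∑ x, μ x * ∑ y, P x y * ((Fintype.card β : ℝ)⁻¹ * ∑ b, h y b ^ 2) + lam * D) := by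
    refine (sum_le_card_mul_sqrt_of_sq_le fun b =>
      matNorm_regCov_sq_le hP hP1 (fun x => hlin x b) hc hlam.le hμ (hθ b)).trans_eq ?_
    congr 2
    simp only [sum_add_distrib, sum_const, card_univ, nsmul_eq_mul, ← mul_sum]
    rw [mul_add, inv_mul_cancel_left₀ hK, mul_left_comm, sum_comm, mul_sum]
    congr 2
    refine sum_congr rfl fun x _ => ?_
    simp only [mul_sum]
    rw [sum_comm]
    exact sum_congr rfl fun y _ => sum_congr rfl fun b _ => by ring
  calc ∑ x, q x * ∑ b, ∑ y, P x y * h y b = ∑ x, q x * ∑ b, φ x ⬝ᵥ θ b := by simp only [hlin]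
    _ ≤ ∑ x, q x * ∑ b, matNorm G⁻¹ (φ x) * matNorm G (θ b) := by
      gcongr with x _ b
      · exact hq x
      · exact dotProduct_le_matNorm_inv_mul_matNorm (posDef_regCov hc hlam hμ φ) _ _
    _ = (∑ x, q x * matNorm G⁻¹ (φ x)) * ∑ b, matNorm G (θ b) := by
      simp only [← mul_sum, sum_mul, mul_assoc]
    _ ≤ (∑ x, q x * matNorm G⁻¹ (φ x)) * (Fintype.card β * Real.sqrt _) := by
      gcongr
      exact sum_nonneg fun x _ => mul_nonneg (hq x) (Real.sqrt_nonneg _)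
    _ = _ := by ring

end OneStepBack

theorem one_step_back_factored_nbhd_general
    {M : ℕ}
    (S : Fin M → Type*) [∀ j, Fintype (S j)]
    (A : Fin M → Type*) [∀ j, Fintype (A j)] [∀ j, Nonempty (A j)]
    {d n : ℕ}
    {lam B : ℝ} (hlam : 0 < lam) (hB : 0 < B)
    (Z : Fin M → Finset (Fin M))
    (φ : (j : Fin M) → ((k : {k // k ∈ Z j}) → S k.1) → A j → Fin d → ℝ)
    (w : (j : Fin M) → S j → Fin d → ℝ)
    (Ploc : (j : Fin M) → ((k : {k // k ∈ Z j}) → S k.1) → A j → S j → ℝ)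
    (hPloc : ∀ j zs a s', Ploc j zs a s' = ∑ m, φ j zs a m * w j s' m)
    (hPlocpos : ∀ j zs a s', 0 ≤ Ploc j zs a s')
    (hPlocsum : ∀ j zs a, ∑ s', Ploc j zs a s' = 1)
    (P : (((j : Fin M) → S j) × ((j : Fin M) → A j)) → ((j : Fin M) → S j) → ℝ)
    (hP : ∀ p s', P p s' = ∏ j, Ploc j (fun k => p.1 k.1) (p.2 j) (s' j))
    (i : Fin M)
    (W : Finset (Fin M))
    (hw : ∀ G : ((k : {k // k ∈ W}) → S k.1) → ℝ,
      (∀ z, G z ∈ Set.Icc (0 : ℝ) 1) →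
      l2norm (fun κ : ({k // k ∈ W} → Fin d) =>
        ∑ z : (k : {k // k ∈ W}) → S k.1,
          (∏ k : {k // k ∈ W}, w k.1 (z k) (κ k)) * G z) ≤
        Real.sqrt ((d : ℝ) ^ W.card))
    (φtil : (((j : Fin M) → S j) × ((j : Fin M) → A j)) → ({k // k ∈ W} → Fin d) → ℝ)
    (hφtil : ∀ p κ, φtil p κ = ∏ k : {k // k ∈ W},
      φ k.1 (fun k' => p.1 k'.1) (p.2 k.1) (κ k))
    (μ : (((j : Fin M) → S j) × ((j : Fin M) → A j)) → ℝ)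
    (hμpos : ∀ p, 0 ≤ μ p)
    (Sigt : Matrix ({k // k ∈ W} → Fin d) ({k // k ∈ W} → Fin d) ℝ)
    (hSigt : Sigt = (n : ℝ) • (∑ p, μ p • vecMulVec (φtil p) (φtil p)) +
      lam • (1 : Matrix ({k // k ∈ W} → Fin d) ({k // k ∈ W} → Fin d) ℝ))
    (ν : (((j : Fin M) → S j) × ((j : Fin M) → A j)) → ℝ)
    (hν : ∀ p, ν p = (1 / (Fintype.card ((j : Fin M) → A j) : ℝ)) * ∑ p', μ p' * P p' p.1)
    (q' : (((j : Fin M) → S j) × ((j : Fin M) → A j)) → ℝ)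
    (hq'pos : ∀ p, 0 ≤ q' p)
    (pol : ((j : Fin M) → S j) → ((j : Fin M) → A j) → ℝ)
    (hpolpos : ∀ s a, 0 ≤ pol s a) (hpolsum : ∀ s, ∑ a, pol s a = 1)
    (q : (((j : Fin M) → S j) × ((j : Fin M) → A j)) → ℝ)
    (hq : ∀ p, q p = ∑ p', q' p' * P p' p.1 * pol p.1 p.2)
    (g : (((k : {k // k ∈ W}) → S k.1) × ((j : {j // j ∈ Z i}) → A j.1)) → ℝ)
    (hg : ∀ x, g x ∈ Set.Icc (0 : ℝ) B) :
    (∑ p, q p * g (fun k => p.1 k.1, fun j => p.2 j.1)) ≤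
      (Fintype.card ((j : {j // j ∈ Z i}) → A j.1) : ℝ) *
        (∑ p, q' p * matNorm Sigt⁻¹ (φtil p)) *
          Real.sqrt ((n : ℝ) * (∑ p, ν p * g (fun k => p.1 k.1, fun j => p.2 j.1) ^ 2)
            + B ^ 2 * lam * (d : ℝ) ^ W.card) := by
  obtain rfl : Sigt = regCov n lam μ φtil := hSigt
  have hP0 (p) (s) : 0 ≤ P p s := hP p s ▸ prod_nonneg fun j _ => hPlocpos _ _ _ _
  have hP1 (p) : ∑ s, P p s = 1 := by
    simp only [hP, ← Fintype.prod_sum]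
    exact Fintype.prod_eq_one _ fun j => hPlocsum _ _ _
  set θ : ((j : {j // j ∈ Z i}) → A j.1) → ({k // k ∈ W} → Fin d) → ℝ :=
    fun b => ∑ z, g (z, b) • tensorVec fun k : {k // k ∈ W} => w k (z k)
  have hlin (p) (b) : ∑ s, P p s * g (fun k => s k.1, b) = φtil p ⬝ᵥ θ b := by
    rw [show φtil p = tensorVec fun k : {k // k ∈ W} => φ k (fun k' => p.1 k'.1) (p.2 k) from
      funext (hφtil p)]
    simp only [hP]
    exact sum_prod_mul_comp_restrict_eq_dotProduct W (fun j _ => hPlocsum _ _ _) _ w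
      (fun j _ => hPloc j _ _) fun z => g (z, b)
  have hθ (b) : ∑ κ, θ b κ ^ 2 ≤ B ^ 2 * (d : ℝ) ^ W.card :=
    sum_sq_sum_smul_le _ hB (by positivity) hw fun z => hg (z, b)
  calc ∑ p, q p * g (fun k => p.1 k.1, fun j => p.2 j.1)
      ≤ ∑ p', q' p' * ∑ b, ∑ s, P p' s * g (fun k => s k.1, b) := by
        simp only [hq]
        exact sum_kernel_policy_mul_le hq'pos hP0 hpolpos hpolsum
          (fun a (j : {j // j ∈ Z i}) => a j.1) (h := fun s b => g (fun k => s k.1, b))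
          fun s b => (hg _).1
    _ ≤ _ := one_step_back_of_linear hP0 hP1 hlin (Nat.cast_nonneg n) hlam hμpos hθ hq'pos
    _ = _ := by
        simp only [hν]
        rw [sum_uniform_kernel_mul_comp_restrict (Z i) μ P fun s b => g (fun k => s k.1, b) ^ 2]
        congr 3
        ring

/-- Second one-step back inequality for low-rank factored Markov games, for functions of
the states of the neighborhood-of-neighborhood W_i = ∪_{j∈Z_i} Z_j and actions of Z_i. -/
theorem one_step_back_factored_nbhd
    {M : ℕ} (hM : 1 ≤ M)
    (S : Fin M → Type*) [∀ j, Fintype (S j)] [∀ j, Nonempty (S j)]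
    (A : Fin M → Type*) [∀ j, Fintype (A j)] [∀ j, Nonempty (A j)]
    {d n : ℕ} (hd : 1 ≤ d) (hn : 1 ≤ n)
    {lam B : ℝ} (hlam : 0 < lam) (hB : 0 < B)
    (Z : Fin M → Finset (Fin M))
    (φ : (j : Fin M) → ((k : {k // k ∈ Z j}) → S k.1) → A j → Fin d → ℝ)
    (hφ : ∀ j zs a, l2norm (φ j zs a) ≤ 1)
    (w : (j : Fin M) → S j → Fin d → ℝ)
    (Ploc : (j : Fin M) → ((k : {k // k ∈ Z j}) → S k.1) → A j → S j → ℝ)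
    (hPloc : ∀ j zs a s', Ploc j zs a s' = ∑ m, φ j zs a m * w j s' m)
    (hPlocpos : ∀ j zs a s', 0 ≤ Ploc j zs a s')
    (hPlocsum : ∀ j zs a, ∑ s', Ploc j zs a s' = 1)
    (P : (((j : Fin M) → S j) × ((j : Fin M) → A j)) → ((j : Fin M) → S j) → ℝ)
    (hP : ∀ p s', P p s' = ∏ j, Ploc j (fun k => p.1 k.1) (p.2 j) (s' j))
    (i : Fin M)
    (W : Finset (Fin M)) (hW : W = (Z i).biUnion Z)
    (hw : ∀ G : ((k : {k // k ∈ W}) → S k.1) → ℝ,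
      (∀ z, G z ∈ Set.Icc (0 : ℝ) 1) →
      l2norm (fun κ : ({k // k ∈ W} → Fin d) =>
        ∑ z : (k : {k // k ∈ W}) → S k.1,
          (∏ k : {k // k ∈ W}, w k.1 (z k) (κ k)) * G z) ≤
        Real.sqrt ((d : ℝ) ^ W.card))
    (φtil : (((j : Fin M) → S j) × ((j : Fin M) → A j)) → ({k // k ∈ W} → Fin d) → ℝ)
    (hφtil : ∀ p κ, φtil p κ = ∏ k : {k // k ∈ W},
      φ k.1 (fun k' => p.1 k'.1) (p.2 k.1) (κ k))
    (μ : (((j : Fin M) → S j) × ((j : Fin M) → A j)) → ℝ)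
    (hμpos : ∀ p, 0 ≤ μ p) (hμsum : ∑ p, μ p = 1)
    (Sigt : Matrix ({k // k ∈ W} → Fin d) ({k // k ∈ W} → Fin d) ℝ)
    (hSigt : Sigt = (n : ℝ) • (∑ p, μ p • vecMulVec (φtil p) (φtil p)) +
      lam • (1 : Matrix ({k // k ∈ W} → Fin d) ({k // k ∈ W} → Fin d) ℝ))
    (ν : (((j : Fin M) → S j) × ((j : Fin M) → A j)) → ℝ)
    (hν : ∀ p, ν p = (1 / (Fintype.card ((j : Fin M) → A j) : ℝ)) * ∑ p', μ p' * P p' p.1)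
    (q' : (((j : Fin M) → S j) × ((j : Fin M) → A j)) → ℝ)
    (hq'pos : ∀ p, 0 ≤ q' p) (hq'sum : ∑ p, q' p = 1)
    (pol : ((j : Fin M) → S j) → ((j : Fin M) → A j) → ℝ)
    (hpolpos : ∀ s a, 0 ≤ pol s a) (hpolsum : ∀ s, ∑ a, pol s a = 1)
    (q : (((j : Fin M) → S j) × ((j : Fin M) → A j)) → ℝ)
    (hq : ∀ p, q p = ∑ p', q' p' * P p' p.1 * pol p.1 p.2)
    (g : (((k : {k // k ∈ W}) → S k.1) × ((j : {j // j ∈ Z i}) → A j.1)) → ℝ)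
    (hg : ∀ x, g x ∈ Set.Icc (0 : ℝ) B) :
    (∑ p, q p * g (fun k => p.1 k.1, fun j => p.2 j.1)) ≤
      (Fintype.card ((j : {j // j ∈ Z i}) → A j.1) : ℝ) *
        (∑ p, q' p * matNorm Sigt⁻¹ (φtil p)) *
          Real.sqrt ((n : ℝ) * (∑ p, ν p * g (fun k => p.1 k.1, fun j => p.2 j.1) ^ 2)
            + B ^ 2 * lam * (d : ℝ) ^ W.card) :=
  one_step_back_factored_nbhd_general S A hlam hB Z φ w Ploc hPloc hPlocpos hPlocsum P hP i W hw
    φtil hφtil μ hμpos Sigt hSigt ν hν q' hq'pos pol hpolpos hpolsum q hq g hg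
end
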